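/- arXiv:2309.14024 — 7 statements merged into one kernel-verified Lean document; each statement's English description precedes it below -/
import Mathlib

section
/- Let K be an algebraically closed field, let f₁,…,f_m ∈ K[x₁,…,xₙ] be homogeneous polynomials, and let (F_i)_{i∈I} be a family of homogeneous polynomials in K[x₁,…,xₙ] such that every F_i vanishes at every point of Kⁿ at which all of f₁,…,f_m vanish. Then there exists an integer r ≥ 1 such that every product of r members of the family (with repetitions allowed), i.e. F_{i₁}·F_{i₂}⋯F_{i_r} for any choice i₁,…,i_r ∈ I, lies in the ideal (f₁,…,f_m). -/
/-!
By the Nullstellensatz every `F i` lies in the radical of `J = (f₁, …, f_m)`. Since the polynomial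
ring is Noetherian, `√J` is finitely generated, so `√J ^ N ≤ J` for some `N`, and `√J ^ (N + 1)`
contains every product of `N + 1` members of the family.
-/

theorem MvPolynomial.mem_radical_span_of_forall_eval_eq_zero {K σ : Type*} [Field K]
    [IsAlgClosed K] [Finite σ] {S : Set (MvPolynomial σ K)} {p : MvPolynomial σ K}
    (hp : ∀ ξ : σ → K, (∀ q ∈ S, eval ξ q = 0) → eval ξ p = 0) :
    p ∈ (Ideal.span S).radical := by
  rw [← vanishingIdeal_zeroLocus_eq_radical (K := K), mem_vanishingIdeal_iff, zeroLocus_span]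
  exact hp

theorem Ideal.exists_forall_prod_mem_of_forall_mem_radical {R ι : Type*} [CommSemiring R]
    {J : Ideal R} (hJ : J.radical.FG) {x : ι → R} (hx : ∀ i, x i ∈ J.radical) :
    ∃ r : ℕ, 1 ≤ r ∧ ∀ g : Fin r → ι, ∏ t, x (g t) ∈ J := by
  obtain ⟨N, hN⟩ := J.exists_radical_pow_le_of_fg hJ
  refine ⟨N + 1, Nat.le_add_left 1 N, fun g => hN <| Ideal.pow_le_pow_right N.le_succ ?_⟩
  simpa only [Finset.prod_const, Finset.card_univ, Fintype.card_fin] using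
    Ideal.prod_mem_prod (s := .univ) (I := fun _ => J.radical) fun t _ => hx (g t)

theorem hilbert_homogeneous_nullstellensatz_general {K : Type*} [Field K] [IsAlgClosed K]
    {n m : ℕ} {I : Type*}
    (f : Fin m → MvPolynomial (Fin n) K)
    (F : I → MvPolynomial (Fin n) K)
    (hvan : ∀ i, ∀ ξ : Fin n → K, (∀ j, MvPolynomial.eval ξ (f j) = 0) →
      MvPolynomial.eval ξ (F i) = 0) :
    ∃ r : ℕ, 1 ≤ r ∧ ∀ g : Fin r → I,
      (∏ t, F (g t)) ∈ Ideal.span (Set.range f) :=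
  Ideal.exists_forall_prod_mem_of_forall_mem_radical (IsNoetherian.noetherian _) fun i =>
    MvPolynomial.mem_radical_span_of_forall_eval_eq_zero fun ξ hξ =>
      hvan i ξ fun j => hξ (f j) ⟨j, rfl⟩

theorem hilbert_homogeneous_nullstellensatz {K : Type*} [Field K] [IsAlgClosed K]
    {n m : ℕ} {I : Type*}
    (f : Fin m → MvPolynomial (Fin n) K) (df : Fin m → ℕ)
    (hf : ∀ j, (f j).IsHomogeneous (df j))
    (F : I → MvPolynomial (Fin n) K) (dF : I → ℕ)
    (hF : ∀ i, (F i).IsHomogeneous (dF i))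
    (hvan : ∀ i, ∀ ξ : Fin n → K, (∀ j, MvPolynomial.eval ξ (f j) = 0) →
      MvPolynomial.eval ξ (F i) = 0) :
    ∃ r : ℕ, 1 ≤ r ∧ ∀ g : Fin r → I,
      (∏ t, F (g t)) ∈ Ideal.span (Set.range f) :=
  hilbert_homogeneous_nullstellensatz_general f F hvan
end

section
/- Every proper ideal a of a commutative Noetherian ring R admits a primary decomposition: there exist finitely many primary ideals q₁,…,q_s of R such that a = q₁ ∩ ⋯ ∩ q_s. -/
theorem Finset.exists_fin_family_inf_id_eq_iInf {α : Type*} [CompleteLattice α] (s : Finset α) :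
    ∃ (n : ℕ) (f : Fin n → α), (∀ i, f i ∈ s) ∧ s.inf id = ⨅ i, f i := by
  refine ⟨s.card, fun i => s.equivFin.symm i, fun i => (s.equivFin.symm i).2, ?_⟩
  calc s.inf id = ⨅ x : s, (x : α) := by rw [Finset.inf_eq_iInf, iInf_subtype]; rfl
    _ = ⨅ i, (s.equivFin.symm i : α) :=
      (s.equivFin.symm.iInf_comp (g := fun x : s => (x : α))).symm

theorem primary_decomposition_exists_general {R : Type*} [CommRing R] [IsNoetherianRing R]
    (a : Ideal R) :
    ∃ (s : ℕ) (q : Fin s → Ideal R),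
      (∀ i, (q i).IsPrimary) ∧ a = ⨅ i, q i := by
  obtain ⟨t, ht, hprimary⟩ := Submodule.isLasker R R a
  obtain ⟨s, q, hqt, hinf⟩ := t.exists_fin_family_inf_id_eq_iInf
  exact ⟨s, q, fun i => hprimary (hqt i), ht ▸ hinf⟩

theorem primary_decomposition_exists {R : Type*} [CommRing R] [IsNoetherianRing R]
    (a : Ideal R) (ha : a ≠ ⊤) :
    ∃ (s : ℕ) (q : Fin s → Ideal R),
      (∀ i, (q i).IsPrimary) ∧ a = ⨅ i, q i :=
  primary_decomposition_exists_general a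
end

section
/- Let K be an algebraically closed field and let a and b be ideals of K[x₁,…,xₙ]. If every element of b vanishes at every common zero of a in Kⁿ, then there exists an integer k ≥ 1 with b^k ⊆ a. -/
namespace MvPolynomial

theorem le_radical_of_forall_eval_eq_zero {K σ : Type*} [Field K] [IsAlgClosed K] [Finite σ]
    {I J : Ideal (MvPolynomial σ K)}
    (h : ∀ f ∈ J, ∀ ξ : σ → K, (∀ g ∈ I, eval ξ g = 0) → eval ξ f = 0) :
    J ≤ I.radical := by
  rw [← vanishingIdeal_zeroLocus_eq_radical (K := K)]
  exact fun f hf ↦ mem_vanishingIdeal_iff.mpr fun ξ hξ ↦ h f hf ξ (mem_zeroLocus_iff.mp hξ)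

end MvPolynomial

theorem nullstellensatz_ideal_version {K : Type*} [Field K] [IsAlgClosed K] {n : ℕ}
    (a b : Ideal (MvPolynomial (Fin n) K))
    (h : ∀ f ∈ b, ∀ ξ : Fin n → K, (∀ g ∈ a, MvPolynomial.eval ξ g = 0) →
      MvPolynomial.eval ξ f = 0) :
    ∃ k : ℕ, 1 ≤ k ∧ b ^ k ≤ a := by
  obtain ⟨k, hk⟩ := Ideal.exists_pow_le_of_le_radical_of_fg
    (MvPolynomial.le_radical_of_forall_eval_eq_zero h) (IsNoetherian.noetherian b)
  exact ⟨k + 1, k.succ_pos, (Ideal.pow_le_pow_right k.le_succ).trans hk⟩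
end

section
/- Let K be an infinite field and consider a system of linear equations c_{11}u₁ + ⋯ + c_{1p}u_p = c₁, …, c_{q1}u₁ + ⋯ + c_{qp}u_p = c_q, where all coefficients c_{ij} and c_i are polynomials in K[t]. If for every value t₀ ∈ K the specialized system (obtained by evaluating all coefficients at t = t₀) has a solution u₁,…,u_p ∈ K, then the original system has a solution with u₁,…,u_p in the field of rational functions K(t). -/
/-!
If the system `C u = d` had no solution over `K(t)`, linear duality would give a row vector `y`
with `y C = 0` and `y ⬝ d ≠ 0`; clearing denominators makes `y` polynomial. Evaluating at a point
`t₀` where the nonzero polynomial `y ⬝ d` does not vanish gives `y(t₀) C(t₀) = 0` but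
`y(t₀) ⬝ d(t₀) ≠ 0`, so the specialized system has no solution over `K`.
-/

namespace Matrix

theorem exists_vecMul_eq_zero_and_dotProduct_ne_zero {F m n : Type*} [Field F]
    [Fintype m] [Fintype n] {C : Matrix m n F} {d : m → F} (h : ∀ u, C *ᵥ u ≠ d) :
    ∃ y, y ᵥ* C = 0 ∧ y ⬝ᵥ d ≠ 0 := by
  classical
  have hd : d ∉ LinearMap.range C.mulVecLin := by
    rintro ⟨u, hu⟩
    exact h u hu
  obtain ⟨f, hfd, hfC⟩ := Submodule.exists_dual_map_eq_bot_of_notMem hd inferInstance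
  set y := (dotProductEquiv F m).symm f
  have hf : ∀ v, f v = y ⬝ᵥ v := fun v => by
    rw [← dotProductEquiv_apply_apply, LinearEquiv.apply_symm_apply]
  refine ⟨y, dotProduct_eq_zero _ fun u => ?_, by rwa [← hf]⟩
  rw [← dotProduct_mulVec, ← hf, ← Submodule.mem_bot F, ← hfC]
  exact Submodule.mem_map_of_mem (LinearMap.mem_range_self C.mulVecLin u)

theorem exists_vecMul_eq_zero_and_dotProduct_ne_zero_of_isFractionRing
    {R F m n : Type*} [CommRing R] [Field F] [Algebra R F] [IsFractionRing R F]
    [Fintype m] [Fintype n] {C : Matrix m n R} {d : m → R}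
    (h : ∀ u : n → F, C.map (algebraMap R F) *ᵥ u ≠ algebraMap R F ∘ d) :
    ∃ z : m → R, z ᵥ* C = 0 ∧ z ⬝ᵥ d ≠ 0 := by
  obtain ⟨y, hyC, hyd⟩ := exists_vecMul_eq_zero_and_dotProduct_ne_zero h
  obtain ⟨b, hb⟩ := IsLocalization.exist_integer_multiples_of_finite (nonZeroDivisors R) y
  choose z hz using hb
  have hbz : algebraMap R F ∘ z = algebraMap R F b • y := by
    ext i; simp [hz i, Algebra.smul_def]
  have hb0 : algebraMap R F b ≠ 0 := (IsLocalization.map_units F b).ne_zero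
  have inj := IsFractionRing.injective R F
  refine ⟨z, ?_, ?_⟩
  · ext j
    apply inj
    rw [RingHom.map_vecMul, hbz, smul_vecMul, hyC, smul_zero, Pi.zero_apply, Pi.zero_apply,
      map_zero]
  · intro hzd
    have := congrArg (algebraMap R F) hzd
    rw [RingHom.map_dotProduct, hbz, smul_dotProduct, map_zero, smul_eq_mul] at this
    exact mul_ne_zero hb0 hyd this

theorem exists_mulVec_eq_of_forall_ne_zero_exists_specialization
    {R F S m n : Type*} [CommRing R] [Field F] [Algebra R F] [IsFractionRing R F] [CommRing S]
    [Fintype m] [Fintype n] (C : Matrix m n R) (d : m → R)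
    (h : ∀ r : R, r ≠ 0 → ∃ φ : R →+* S, φ r ≠ 0 ∧ ∃ u, C.map φ *ᵥ u = φ ∘ d) :
    ∃ u : n → F, C.map (algebraMap R F) *ᵥ u = algebraMap R F ∘ d := by
  by_contra! hC
  obtain ⟨z, hzC, hzd⟩ := exists_vecMul_eq_zero_and_dotProduct_ne_zero_of_isFractionRing hC
  obtain ⟨φ, hφ, u, hu⟩ := h _ hzd
  apply hφ
  have hφz : (φ ∘ z) ᵥ* C.map φ = 0 := by
    ext j
    rw [← RingHom.map_vecMul, hzC, Pi.zero_apply, Pi.zero_apply, map_zero]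
  rw [RingHom.map_dotProduct, ← hu, dotProduct_mulVec, hφz, zero_dotProduct]

end Matrix

theorem linear_system_rational_solution {K : Type*} [Field K] [Infinite K] {p q : ℕ}
    (c : Fin q → Fin p → Polynomial K) (d : Fin q → Polynomial K)
    (h : ∀ t₀ : K, ∃ u : Fin p → K,
      ∀ i, ∑ j, (c i j).eval t₀ * u j = (d i).eval t₀) :
    ∃ u : Fin p → RatFunc K,
      ∀ i, ∑ j, algebraMap (Polynomial K) (RatFunc K) (c i j) * u j =
        algebraMap (Polynomial K) (RatFunc K) (d i) := by
  obtain ⟨u, hu⟩ := Matrix.exists_mulVec_eq_of_forall_ne_zero_exists_specialization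
    (F := RatFunc K) (S := K) (Matrix.of c) d fun g hg => by
      obtain ⟨t₀, ht₀⟩ : ∃ t₀, g.eval t₀ ≠ 0 := by
        by_contra! hroot
        exact hg (Polynomial.zero_of_eval_zero g hroot)
      obtain ⟨u, hu⟩ := h t₀
      exact ⟨Polynomial.evalRingHom t₀, ht₀, u, funext hu⟩
  exact ⟨u, congrFun hu⟩
end

section
/- Let K be an algebraically closed field and let a be an ideal of K[x₁,…,xₙ] whose set of common zeros in Kⁿ is finite, say {P₁,…,P_s}. For a point P = (ξ₁,…,ξₙ) let m_P denote the maximal ideal (x₁−ξ₁,…,xₙ−ξₙ). Then there exists an integer ρ ≥ 1, depending only on a, such that every polynomial f with f ∈ a + m_{P_i}^ρ for all i = 1,…,s satisfies f ∈ a. -/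
/-! Distinct points have comaximal ideals `m_P`, so the ideals `a + m_P^ρ` are pairwise comaximal
and their intersection is their product, which lies in `a + (∏ m_P)^ρ`. By the Nullstellensatz
`∏ m_P` lies in the radical of `a`, and a power of the radical lies in `a` since the ring is
Noetherian; any `ρ` at least that exponent works. -/

open Function MvPolynomial

namespace Ideal

variable {R ι : Type*} [CommRing R]

theorem prod_sup_le_sup_prod (a : Ideal R) (s : Finset ι) (J : ι → Ideal R) :
    ∏ i ∈ s, (a ⊔ J i) ≤ a ⊔ ∏ i ∈ s, J i := by
  classical
  induction s using Finset.cons_induction with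
  | empty => simp
  | cons i s hi ih =>
    rw [Finset.prod_cons, Finset.prod_cons]
    calc (a ⊔ J i) * ∏ j ∈ s, (a ⊔ J j) ≤ (a ⊔ J i) * (a ⊔ ∏ j ∈ s, J j) :=
          mul_mono_right ih
      _ ≤ a ⊔ J i * ∏ j ∈ s, J j := by
          rw [sup_mul, mul_sup, mul_sup]
          exact sup_le (le_sup_of_le_left (sup_le mul_le_left mul_le_left))
            (sup_le (le_sup_of_le_left mul_le_right) le_sup_right)

theorem iInf_sup_pow_le_of_prod_pow_le {a : Ideal R} {s : Finset ι} {M : ι → Ideal R}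
    (hM : (s : Set ι).Pairwise (IsCoprime on M)) {ρ : ℕ} (h : (∏ i ∈ s, M i) ^ ρ ≤ a) :
    ⨅ i ∈ s, (a ⊔ M i ^ ρ) ≤ a := by
  have hcop : (s : Set ι).Pairwise (IsCoprime on fun i => a ⊔ M i ^ ρ) :=
    hM.mono' fun _ _ hij => isCoprime_iff_codisjoint.mpr <|
      (isCoprime_iff_codisjoint.mp (hij.pow (m := ρ) (n := ρ))).mono le_sup_right le_sup_right
  calc ⨅ i ∈ s, (a ⊔ M i ^ ρ) = ∏ i ∈ s, (a ⊔ M i ^ ρ) :=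
        (prod_eq_iInf_of_pairwise_isCoprime hcop).symm
    _ ≤ a ⊔ ∏ i ∈ s, M i ^ ρ := prod_sup_le_sup_prod a s _
    _ ≤ a := by rw [Finset.prod_pow]; exact sup_le le_rfl h

end Ideal

namespace MvPolynomial

variable {σ K : Type*} [Field K]

theorem span_X_sub_C_le_vanishingIdeal_singleton (P : σ → K) :
    Ideal.span (Set.range fun i => X i - C (P i)) ≤ vanishingIdeal K {P} := by
  rw [Ideal.span_le]
  rintro _ ⟨i, rfl⟩
  simp

theorem isCoprime_span_X_sub_C {P Q : σ → K} (hPQ : P ≠ Q) :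
    IsCoprime (Ideal.span (Set.range fun i => X i - C (P i)))
      (Ideal.span (Set.range fun i => X i - C (Q i))) := by
  obtain ⟨i, hi⟩ := Function.ne_iff.mp hPQ
  rw [Ideal.isCoprime_iff_sup_eq]
  have hdiff : C (Q i - P i) ∈ Ideal.span (Set.range fun i => X i - C (P i)) ⊔
      Ideal.span (Set.range fun i => X i - C (Q i)) := by
    have hP : X i - C (P i) ∈ Ideal.span (Set.range fun i => X i - C (P i)) :=
      Ideal.subset_span ⟨i, rfl⟩
    have hQ : X i - C (Q i) ∈ Ideal.span (Set.range fun i => X i - C (Q i)) :=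
      Ideal.subset_span ⟨i, rfl⟩
    have := Submodule.sub_mem _ (Ideal.mem_sup_left hP) (Ideal.mem_sup_right hQ)
    simpa only [sub_sub_sub_cancel_left, map_sub] using this
  exact Ideal.eq_top_of_isUnit_mem _ hdiff ((sub_ne_zero.mpr hi.symm).isUnit.map C)

theorem prod_span_X_sub_C_le_radical [IsAlgClosed K] [Finite σ]
    {a : Ideal (MvPolynomial σ K)} {s : Finset (σ → K)} (hs : zeroLocus K a ⊆ s) :
    ∏ P ∈ s, Ideal.span (Set.range fun i => X i - C (P i)) ≤ a.radical := by
  rw [← vanishingIdeal_zeroLocus_eq_radical (K := K)]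
  intro p hp x hx
  have hp' := Ideal.prod_le_inf.trans (Finset.inf_mono_fun fun P _ =>
    span_X_sub_C_le_vanishingIdeal_singleton P) hp
  exact (Submodule.mem_finsetInf.mp hp') x (hs hx) x rfl

end MvPolynomial

theorem noether_theorem_finite_zeros {K : Type*} [Field K] [IsAlgClosed K] {n : ℕ}
    (a : Ideal (MvPolynomial (Fin n) K))
    (hfin : {ξ : Fin n → K | ∀ g ∈ a, MvPolynomial.eval ξ g = 0}.Finite) :
    ∃ ρ : ℕ, 1 ≤ ρ ∧ ∀ f : MvPolynomial (Fin n) K,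
      (∀ P : Fin n → K, (∀ g ∈ a, MvPolynomial.eval P g = 0) →
        f ∈ a + (Ideal.span (Set.range fun i =>
          MvPolynomial.X i - MvPolynomial.C (P i))) ^ ρ) →
      f ∈ a := by
  obtain ⟨ρ₀, hρ₀⟩ := Ideal.exists_radical_pow_le_of_fg a (IsNoetherian.noetherian _)
  refine ⟨ρ₀ + 1, Nat.le_add_left 1 ρ₀, fun f hf => ?_⟩
  have hpow : (∏ P ∈ hfin.toFinset, Ideal.span (Set.range fun i => X i - C (P i))) ^ (ρ₀ + 1)
      ≤ a :=
    calc _ ≤ a.radical ^ (ρ₀ + 1) :=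
          Ideal.pow_right_mono (prod_span_X_sub_C_le_radical fun ξ hξ => by simpa using hξ) _
      _ ≤ a.radical ^ ρ₀ := Ideal.pow_le_pow_right (Nat.le_succ ρ₀)
      _ ≤ a := hρ₀
  refine Ideal.iInf_sup_pow_le_of_prod_pow_le
    (fun P _ Q _ hPQ => isCoprime_span_X_sub_C hPQ) hpow ?_
  simp only [Submodule.mem_iInf]
  exact fun P hP => hf P (hfin.mem_toFinset.mp hP)
end

section
/- Let K be an algebraically closed field and let f, φ, ψ ∈ K[x,y] be polynomials in two variables such that f vanishes at every common zero of φ and ψ in K². Then some power of f can be expressed as a linear combination of φ and ψ: there exist an integer ρ ≥ 1 and polynomials A, B ∈ K[x,y] with f^ρ = Aφ + Bψ. -/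
/-! Hilbert's Nullstellensatz puts `f` in the radical of the ideal `(φ, ψ)`; if `f ^ n` lies in
that ideal then so does `f ^ (n + 1)`, which takes care of the requirement `ρ ≥ 1`. -/

theorem Ideal.exists_pos_pow_mem_of_mem_radical {R : Type*} [CommSemiring R] {I : Ideal R} {f : R}
    (hf : f ∈ I.radical) : ∃ n, 1 ≤ n ∧ f ^ n ∈ I := by
  obtain ⟨n, hn⟩ := hf
  exact ⟨n + 1, Nat.le_add_left 1 n, pow_succ' f n ▸ I.mul_mem_left f hn⟩

namespace MvPolynomial

theorem mem_radical_span_of_eval_eq_zero {σ K : Type*} [Finite σ] [Field K] [IsAlgClosed K]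
    {S : Set (MvPolynomial σ K)} {f : MvPolynomial σ K}
    (h : ∀ ξ : σ → K, (∀ p ∈ S, eval ξ p = 0) → eval ξ f = 0) :
    f ∈ (Ideal.span S).radical := by
  rw [← vanishingIdeal_zeroLocus_eq_radical (K := K), mem_vanishingIdeal_iff, zeroLocus_span]
  exact h

end MvPolynomial

theorem netto_theorem {K : Type*} [Field K] [IsAlgClosed K]
    (f φ ψ : MvPolynomial (Fin 2) K)
    (h : ∀ ξ : Fin 2 → K, MvPolynomial.eval ξ φ = 0 → MvPolynomial.eval ξ ψ = 0 →
      MvPolynomial.eval ξ f = 0) :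
    ∃ (ρ : ℕ) (A B : MvPolynomial (Fin 2) K),
      1 ≤ ρ ∧ f ^ ρ = A * φ + B * ψ := by
  have hf : f ∈ (Ideal.span {φ, ψ}).radical :=
    MvPolynomial.mem_radical_span_of_eval_eq_zero fun ξ hξ ↦
      h ξ (hξ φ (by simp)) (hξ ψ (by simp))
  obtain ⟨ρ, hρ, hmem⟩ := Ideal.exists_pos_pow_mem_of_mem_radical hf
  obtain ⟨A, B, hAB⟩ := Ideal.mem_span_pair.mp hmem
  exact ⟨ρ, A, B, hρ, hAB.symm⟩
end

section
/- Let K be a field, let a = (F₁,…,F_k) be an ideal of K[x₁,…,xₙ], and let F ∈ K[x₁,…,xₙ]. If F can be written as F = P₁F₁ + ⋯ + P_kF_k with formal power series P₁,…,P_k ∈ K[[x₁,…,xₙ]] (i.e. F lies in the ideal generated by F₁,…,F_k in the formal power series ring), then there exists a polynomial φ ∈ K[x₁,…,xₙ] whose constant term φ(0,…,0) is nonzero such that φ·F ∈ a. -/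
/-!
Let `𝔪 = (x₁, …, xₙ)`. Truncation at total degree `d` is a ring homomorphism
`K[[x]] → K[x] ⧸ 𝔪ᵈ` extending the quotient map, so `F ∈ a·K[[x]]` gives `F ∈ a + 𝔪ᵈ` for
every `d`. By the Krull intersection theorem for the finitely generated `K[x]`-module
`K[x] ⧸ a`, the class of `F` is then killed by some `1 - ρ` with `ρ ∈ 𝔪`, and `φ = 1 - ρ`
has constant term `1`.
-/

open MvPolynomial

theorem Ideal.exists_one_sub_mul_mem_of_forall_mem_sup_pow {R : Type*} [CommRing R]
    [IsNoetherianRing R] {a I : Ideal R} {x : R} (hx : ∀ d : ℕ, x ∈ a ⊔ I ^ d) :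
    ∃ r ∈ I, (1 - r) * x ∈ a := by
  have hmem : Ideal.Quotient.mk a x ∈ (⨅ d : ℕ, I ^ d • ⊤ : Submodule R (R ⧸ a)) := by
    rw [Submodule.mem_iInf]
    intro d
    obtain ⟨y, hy, z, hz, rfl⟩ := Submodule.mem_sup.mp (hx d)
    rw [map_add, Ideal.Quotient.eq_zero_iff_mem.mpr hy, zero_add, ← mul_one z, map_mul]
    exact Submodule.smul_mem_smul hz (Submodule.mem_top (x := (1 : R ⧸ a)))
  obtain ⟨⟨r, hr⟩, hrx⟩ := (I.mem_iInf_smul_pow_eq_bot_iff _).mp hmem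
  refine ⟨r, hr, Ideal.Quotient.eq_zero_iff_mem.mp ?_⟩
  rw [map_mul, map_sub, map_one, sub_mul, one_mul, sub_eq_zero]
  exact hrx.symm

theorem MvPolynomial.eval_zero_eq_zero_of_mem_idealOfVars {σ R : Type*} [CommRing R]
    {p : MvPolynomial σ R} (hp : p ∈ idealOfVars σ R) : eval 0 p = 0 := by
  rw [← pow_one (idealOfVars σ R), mem_pow_idealOfVars_iff'] at hp
  simpa [eval_zero, constantCoeff_eq] using hp 0 (by simp)

theorem MvPolynomial.algebraMap_mvPowerSeries_apply {σ R : Type*} [CommSemiring R]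
    (p : MvPolynomial σ R) : algebraMap (MvPolynomial σ R) (MvPowerSeries σ R) p = p := by
  rw [MvPowerSeries.algebraMap_apply', Algebra.algebraMap_self, MvPowerSeries.map_id]
  rfl

theorem MvPolynomial.mem_sup_pow_idealOfVars_of_coe_mem_map {σ R : Type*} [CommRing R]
    [Finite σ] {a : Ideal (MvPolynomial σ R)} {F : MvPolynomial σ R}
    (hF : (F : MvPowerSeries σ R) ∈ a.map (algebraMap _ (MvPowerSeries σ R))) (d : ℕ) :
    F ∈ a ⊔ idealOfVars σ R ^ d := by
  have := Ideal.mem_map_of_mem (MvPowerSeries.truncTotalAlgHom σ R d).toRingHom hF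
  rw [Ideal.map_map, AlgHom.toRingHom_eq_coe, AlgHom.comp_algebraMap,
    ← algebraMap_mvPowerSeries_apply, AlgHom.coe_toRingHom, AlgHom.commutes] at this
  rwa [← Ideal.mem_quotient_iff_mem_sup, ← Ideal.Quotient.algebraMap_eq]

theorem lasker_noether_power_series {K : Type*} [Field K] {n k : ℕ}
    (Fs : Fin k → MvPolynomial (Fin n) K) (F : MvPolynomial (Fin n) K)
    (h : (F : MvPowerSeries (Fin n) K) ∈
      Ideal.span (Set.range fun i => ((Fs i : MvPowerSeries (Fin n) K)))) :
    ∃ φ : MvPolynomial (Fin n) K,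
      MvPolynomial.eval (0 : Fin n → K) φ ≠ 0 ∧
      φ * F ∈ Ideal.span (Set.range Fs) := by
  have hF : (F : MvPowerSeries (Fin n) K) ∈
      (Ideal.span (Set.range Fs)).map (algebraMap _ (MvPowerSeries (Fin n) K)) := by
    rwa [Ideal.map_span, ← Set.range_comp, Function.comp_def,
      funext algebraMap_mvPowerSeries_apply]
  obtain ⟨ρ, hρ, hρF⟩ := Ideal.exists_one_sub_mul_mem_of_forall_mem_sup_pow
    (mem_sup_pow_idealOfVars_of_coe_mem_map hF)
  refine ⟨1 - ρ, ?_, hρF⟩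
  rw [map_sub, map_one, eval_zero_eq_zero_of_mem_idealOfVars hρ, sub_zero]
  exact one_ne_zero
end
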